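/- For the renormalized affinity matrix Â of a finite simple graph, all eigenvalues λ of Â satisfy λ > −1; equivalently, I + Â is positive definite. -/

import Mathlib

/-!
Write `Ã = A + I`, `D̃ = diag (∑ⱼ Ã i j) = D + I` and `S = D̃^{-1/2}`. Since `S D̃ S = I`,
`I + Â = S (D̃ + Ã) S`, and `D̃ + Ã = (D + A) + 2 I`. The signless Laplacian `D + A` equals
`B Bᵀ` for the vertex–edge incidence matrix `B`, so it is positive semidefinite; hence
`D̃ + Ã` is positive definite, and so is its congruent `I + Â`. An eigenvector `v` of `Â` with
eigenvalue `μ` then gives `0 < vᵀ (I + Â) v = (1 + μ) ‖v‖²`.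
-/

open Matrix

namespace Matrix

variable {n : Type*} [Fintype n]

theorem PosDef.pos_of_mulVec_eq_smul {M : Matrix n n ℝ} (hM : M.PosDef) {μ : ℝ} {v : n → ℝ}
    (hv : v ≠ 0) (h : M *ᵥ v = μ • v) : 0 < μ := by
  have := hM.dotProduct_mulVec_pos hv
  rw [h, dotProduct_smul, smul_eq_mul] at this
  exact pos_of_mul_pos_left this (dotProduct_star_self_pos_iff.mpr hv).le

variable [DecidableEq n]

theorem posDef_diagonal_mul_mul_diagonal_iff {s : n → ℝ} (hs : ∀ i, s i ≠ 0)
    {M : Matrix n n ℝ} : (diagonal s * M * diagonal s).PosDef ↔ M.PosDef := by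
  have hunit : IsUnit (diagonal s) :=
    isUnit_diagonal.mpr (Pi.isUnit_iff.mpr fun i => (hs i).isUnit)
  have := hunit.posDef_star_left_conjugate_iff (x := M)
  rwa [star_eq_conjTranspose, diagonal_conjTranspose, star_trivial] at this

theorem one_add_diagonal_inv_sqrt_mul_mul_eq {d : n → ℝ} (hd : ∀ i, 0 < d i) (M : Matrix n n ℝ) :
    1 + diagonal (fun i => (√(d i))⁻¹) * M * diagonal (fun i => (√(d i))⁻¹)
      = diagonal (fun i => (√(d i))⁻¹) * (diagonal d + M) * diagonal (fun i => (√(d i))⁻¹) := by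
  have hscale :
      diagonal (fun i => (√(d i))⁻¹) * diagonal d * diagonal (fun i => (√(d i))⁻¹) = 1 := by
    rw [diagonal_mul_diagonal, diagonal_mul_diagonal, ← diagonal_one]
    congr 1
    funext i
    field_simp
    rw [Real.sq_sqrt (hd i).le, div_self (hd i).ne']
  rw [mul_add, add_mul, hscale]

end Matrix

namespace SimpleGraph

variable {V : Type*} [Fintype V] [DecidableEq V] (G : SimpleGraph V) [DecidableRel G.Adj]

theorem degMatrix_add_adjMatrix_eq_incMatrix_mul_transpose (R : Type*) [Semiring R] :
    G.degMatrix R + G.adjMatrix R = G.incMatrix R * (G.incMatrix R)ᵀ := by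
  rw [incMatrix_mul_transpose]
  ext a b
  by_cases hab : a = b
  · subst hab; simp [degMatrix]
  · simp [degMatrix, hab]

theorem posSemidef_degMatrix_add_adjMatrix : (G.degMatrix ℝ + G.adjMatrix ℝ).PosSemidef := by
  rw [degMatrix_add_adjMatrix_eq_incMatrix_mul_transpose]
  exact posSemidef_self_mul_conjTranspose _

theorem sum_adjMatrix_add_one_apply (R : Type*) [NonAssocSemiring R] (i : V) :
    ∑ j, (G.adjMatrix R + 1) i j = G.degree i + 1 := by
  simp [Finset.sum_add_distrib, Matrix.one_apply, degree_eq_sum_if_adj (R := R) G i]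

noncomputable def renormalizedAffinity : Matrix V V ℝ :=
  diagonal (fun i => (√(∑ j, (G.adjMatrix ℝ + 1) i j))⁻¹) * (G.adjMatrix ℝ + 1) *
    diagonal (fun i => (√(∑ j, (G.adjMatrix ℝ + 1) i j))⁻¹)

theorem posDef_one_add_renormalizedAffinity : (1 + G.renormalizedAffinity).PosDef := by
  have hdeg : ∀ i, 0 < ∑ j, (G.adjMatrix ℝ + 1) i j := fun i => by
    rw [sum_adjMatrix_add_one_apply]; positivity
  rw [renormalizedAffinity, one_add_diagonal_inv_sqrt_mul_mul_eq hdeg,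
    posDef_diagonal_mul_mul_diagonal_iff fun i => (inv_pos.mpr (Real.sqrt_pos.mpr (hdeg i))).ne']
  have hsplit : diagonal (fun i => ∑ j, (G.adjMatrix ℝ + 1) i j) + (G.adjMatrix ℝ + 1)
      = (G.degMatrix ℝ + G.adjMatrix ℝ) + 2 := by
    simp only [sum_adjMatrix_add_one_apply, degMatrix, ← diagonal_add, diagonal_one]
    rw [← one_add_one_eq_two]
    abel
  rw [hsplit]
  exact PosDef.posSemidef_add G.posSemidef_degMatrix_add_adjMatrix (PosDef.ofNat 2)

end SimpleGraph

/-- For the renormalized affinity matrix `Â` of a finite simple graph, all eigenvalues `μ`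
satisfy `μ > −1`; equivalently, `I + Â` is positive definite. -/
theorem renormalized_affinity_eigenvalue_gt_neg_one (N : ℕ) (G : SimpleGraph (Fin N))
    [DecidableRel G.Adj] :
    (∀ (μ : ℝ) (v : Fin N → ℝ), v ≠ 0 →
      (Matrix.diagonal (fun i => (Real.sqrt (∑ j, (G.adjMatrix ℝ + 1) i j))⁻¹) *
          (G.adjMatrix ℝ + 1) *
        Matrix.diagonal (fun i => (Real.sqrt (∑ j, (G.adjMatrix ℝ + 1) i j))⁻¹)).mulVec v
        = μ • v → -1 < μ) ∧
    (∀ x : Fin N → ℝ, x ≠ 0 →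
      0 < dotProduct x
        ((1 +
          Matrix.diagonal (fun i => (Real.sqrt (∑ j, (G.adjMatrix ℝ + 1) i j))⁻¹) *
            (G.adjMatrix ℝ + 1) *
          Matrix.diagonal (fun i => (Real.sqrt (∑ j, (G.adjMatrix ℝ + 1) i j))⁻¹)).mulVec x)) := by
  have hpd := G.posDef_one_add_renormalizedAffinity
  refine ⟨fun μ v hv heig => ?_, fun x hx => hpd.dotProduct_mulVec_pos hx⟩
  have hshift : (1 + G.renormalizedAffinity) *ᵥ v = (1 + μ) • v := by
    rw [add_mulVec, one_mulVec, SimpleGraph.renormalizedAffinity, heig, add_smul, one_smul]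
  linarith [hpd.pos_of_mulVec_eq_smul hv hshift]
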